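/- arXiv:1111.6094 — 2 statements merged into one kernel-verified Lean document; each statement's English description precedes it below -/
import Mathlib

section
/- Let A be a nonempty subset of an SSD space B and let D be a w(B,B)-closed convex subset of B such that Φ_A(b) ≥ q(b) for all b ∈ D. If A^π ∩ D ≠ ∅, then A^π ∩ D is q-representable. -/
noncomputable section

variable {B : Type*} [AddCommGroup B] [Module ℝ B]

/-- The quadratic form `q(x) = ½⌊x,x⌋` associated to the bilinear form `br`. -/
def qQ (br : B →ₗ[ℝ] B →ₗ[ℝ] ℝ) (x : B) : ℝ := (1 / 2) * br x x

/-- `A` is `q`-positive: nonempty and `q(b - c) ≥ 0` for all `b, c ∈ A`. -/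
def IsQPositive (br : B →ₗ[ℝ] B →ₗ[ℝ] ℝ) (A : Set B) : Prop :=
  A.Nonempty ∧ ∀ b ∈ A, ∀ c ∈ A, 0 ≤ qQ br (b - c)

/-- `A^π`, the set of points `q`-positively related to `A`. -/
def qPi (br : B →ₗ[ℝ] B →ₗ[ℝ] ℝ) (A : Set B) : Set B :=
  {b : B | ∀ a ∈ A, 0 ≤ qQ br (b - a)}

/-- `A` is maximally `q`-positive. -/
def IsMaxQPositive (br : B →ₗ[ℝ] B →ₗ[ℝ] ℝ) (A : Set B) : Prop :=
  IsQPositive br A ∧ ∀ C : Set B, IsQPositive br C → A ⊆ C → C = A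

/-- The generalized Fitzpatrick function `Φ_A(x) = sup_{a ∈ A} (⌊x,a⌋ - q(a))`. -/
def PhiF (br : B →ₗ[ℝ] B →ₗ[ℝ] ℝ) (A : Set B) (x : B) : EReal :=
  ⨆ a ∈ A, ((br x a - qQ br a : ℝ) : EReal)

/-- The intrinsic conjugate `f^@(b) = sup_{c ∈ B} (⌊c,b⌋ - f(c))`. -/
def intrinsicConj (br : B →ₗ[ℝ] B →ₗ[ℝ] ℝ) (f : B → EReal) (b : B) : EReal :=
  ⨆ c : B, ((br c b : ℝ) : EReal) - f c

/-- `P_q(f) = {b : f(b) = q(b)}`. -/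
def PqSet (br : B →ₗ[ℝ] B →ₗ[ℝ] ℝ) (f : B → EReal) : Set B :=
  {b : B | f b = ((qQ br b : ℝ) : EReal)}

/-- `G_f = {b : f(b) + f^@(b) = ⌊b,b⌋}`. -/
def GSet (br : B →ₗ[ℝ] B →ₗ[ℝ] ℝ) (f : B → EReal) : Set B :=
  {b : B | f b + intrinsicConj br f b = ((br b b : ℝ) : EReal)}

/-- Convexity for `ℝ ∪ {+∞}`-valued functions. -/
def ConvexE (f : B → EReal) : Prop :=
  ∀ x y : B, ∀ α β : ℝ, 0 ≤ α → 0 ≤ β → α + β = 1 →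
    f (α • x + β • y) ≤ (α : EReal) * f x + (β : EReal) * f y

/-- The weak topology `w(B,B)` induced by the functionals `⌊·,b⌋`, `b ∈ B`. -/
def weakTop (br : B →ₗ[ℝ] B →ₗ[ℝ] ℝ) : TopologicalSpace B :=
  ⨅ b : B, TopologicalSpace.induced (fun x => br x b) inferInstance

/-- Lower semicontinuity with respect to the weak topology `w(B,B)`. -/
def LscW (br : B →ₗ[ℝ] B →ₗ[ℝ] ℝ) (f : B → EReal) : Prop :=
  @LowerSemicontinuous B EReal (weakTop br) _ f

/-- `A` is `q`-representable: it has a `w(B,B)`-lsc proper convex `q`-representation. -/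
def IsQRepresentable (br : B →ₗ[ℝ] B →ₗ[ℝ] ℝ) (A : Set B) : Prop :=
  ∃ f : B → EReal, LscW br f ∧ ConvexE f ∧ (∃ x, f x ≠ ⊤) ∧
    (∀ x, ((qQ br x : ℝ) : EReal) ≤ f x) ∧ PqSet br f = A


/-! The representative is `Φ_A + ι_D`: the Fitzpatrick function is a supremum of `w(B,B)`-continuous
affine functions, hence `w(B,B)`-lsc and convex, and so is its restriction to the closed convex set `D`
(extended by `⊤`). Symmetry of `⌊·,·⌋` gives `q(b - a) = q(b) - (⌊b,a⌋ - q(a))`, so `Φ_A(b) ≤ q(b)`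
exactly on `A^π`; together with `Φ_A ≥ q` on `D` this identifies `P_q(Φ_A + ι_D)` with `A^π ∩ D`. -/

theorem LowerSemicontinuous.ite_mem_top {α β : Type*} [TopologicalSpace α] [Preorder β]
    [OrderTop β] {D : Set α} [DecidablePred (· ∈ D)] {g : α → β} (hg : LowerSemicontinuous g) (hD : IsClosed D) :
    LowerSemicontinuous fun x => if x ∈ D then g x else ⊤ := by
  intro x y hy
  dsimp only at hy ⊢
  by_cases hx : x ∈ D
  · rw [if_pos hx] at hy
    filter_upwards [hg x y hy] with z hz
    split_ifs
    exacts [hz, hz.trans_le le_top]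
  · rw [if_neg hx] at hy
    filter_upwards [hD.isOpen_compl.mem_nhds hx] with z hz
    rwa [if_neg hz]

theorem EReal.coe_nonneg_mul_ne_bot {a : ℝ} (ha : 0 ≤ a) {x : EReal} (hx : x ≠ ⊥) :
    (a : EReal) * x ≠ ⊥ :=
  (EReal.mul_ne_bot _ _).2
    ⟨.inl (EReal.coe_ne_bot a), .inr hx, .inl (EReal.coe_ne_top a), .inl (by exact_mod_cast ha)⟩

section ConvexE

variable {B : Type*} [AddCommGroup B] [Module ℝ B] {D : Set B} [DecidablePred (· ∈ D)]

theorem ConvexE.ite_mem_top {g : B → EReal} (hg : ConvexE g) (hD : Convex ℝ D)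
    (hg_ne_bot : ∀ x ∈ D, g x ≠ ⊥) :
    ConvexE fun x => if x ∈ D then g x else ⊤ := by
  set f : B → EReal := fun x => if x ∈ D then g x else ⊤
  have hf_ne_bot : ∀ x, f x ≠ ⊥ := fun x => by
    by_cases hx : x ∈ D
    · simpa [f, hx] using hg_ne_bot x hx
    · simp [f, hx]
  intro x y a b ha hb hab
  obtain rfl | ha_pos := ha.eq_or_lt
  · obtain rfl : b = 1 := by linarith
    simp
  obtain rfl | hb_pos := hb.eq_or_lt
  · obtain rfl : a = 1 := by linarith
    simp
  by_cases hx : x ∈ D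
  · by_cases hy : y ∈ D
    · simpa only [f, if_pos hx, if_pos hy, if_pos (hD hx hy ha hb hab)] using hg x y a b ha hb hab
    · have : (b : EReal) * f y = ⊤ := by
        simpa only [f, if_neg hy] using EReal.mul_top_of_pos (by exact_mod_cast hb_pos)
      rw [this, EReal.add_top_of_ne_bot (EReal.coe_nonneg_mul_ne_bot ha (hf_ne_bot x))]
      exact le_top
  · have : (a : EReal) * f x = ⊤ := by
      simpa only [f, if_neg hx] using EReal.mul_top_of_pos (by exact_mod_cast ha_pos)
    rw [this, EReal.top_add_of_ne_bot (EReal.coe_nonneg_mul_ne_bot hb (hf_ne_bot y))]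
    exact le_top

end ConvexE

section Fitzpatrick

variable {B : Type*} [AddCommGroup B] [Module ℝ B] (br : B →ₗ[ℝ] B →ₗ[ℝ] ℝ) (A : Set B)

theorem continuous_weakTop_apply (a : B) : @Continuous B ℝ (weakTop br) _ fun x => br x a :=
  continuous_iInf_dom continuous_induced_dom

theorem lscW_PhiF : LscW br (PhiF br A) := by
  let _ := weakTop br
  exact lowerSemicontinuous_biSup fun a _ =>
    (continuous_coe_real_ereal.comp
      ((continuous_weakTop_apply br a).sub continuous_const)).lowerSemicontinuous

theorem convexE_PhiF : ConvexE (PhiF br A) := by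
  intro x y α β hα hβ hαβ
  refine iSup₂_le fun a ha => ?_
  have h_affine : br (α • x + β • y) a - qQ br a
      = α * (br x a - qQ br a) + β * (br y a - qQ br a) := by
    simp only [map_add, map_smul, LinearMap.add_apply, LinearMap.smul_apply, smul_eq_mul]
    linear_combination qQ br a * hαβ
  rw [h_affine, EReal.coe_add, EReal.coe_mul, EReal.coe_mul]
  gcongr <;> first
    | exact_mod_cast hα
    | exact_mod_cast hβ
    | exact le_iSup₂ (f := fun a (_ : a ∈ A) => ((br _ a - qQ br a : ℝ) : EReal)) a ha

theorem qQ_sub (hsym : ∀ x y : B, br x y = br y x) (b a : B) :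
    qQ br (b - a) = qQ br b - (br b a - qQ br a) := by
  simp only [qQ, map_sub, LinearMap.sub_apply, hsym a b]
  ring

theorem PhiF_le_qQ_iff_mem_qPi (hsym : ∀ x y : B, br x y = br y x) (b : B) :
    PhiF br A b ≤ qQ br b ↔ b ∈ qPi br A := by
  simp only [PhiF, iSup₂_le_iff, EReal.coe_le_coe_iff, qPi, Set.mem_ofPred_eq, qQ_sub br hsym,
    sub_nonneg]

end Fitzpatrick

theorem stmt9_general (br : B →ₗ[ℝ] B →ₗ[ℝ] ℝ)
    (hsym : ∀ x y : B, br x y = br y x)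
    (A D : Set B)
    (hDclosed : @IsClosed B (weakTop br) D) (hDconv : Convex ℝ D)
    (hPhi : ∀ b ∈ D, ((qQ br b : ℝ) : EReal) ≤ PhiF br A b)
    (hne : (qPi br A ∩ D).Nonempty) :
    IsQRepresentable br (qPi br A ∩ D) := by
  classical
  let _ := weakTop br
  set f : B → EReal := fun x => if x ∈ D then PhiF br A x else ⊤
  have hPhi_ne_bot : ∀ x ∈ D, PhiF br A x ≠ ⊥ := fun x hx =>
    ne_bot_of_le_ne_bot (EReal.coe_ne_bot _) (hPhi x hx)
  have hq_le : ∀ x, ((qQ br x : ℝ) : EReal) ≤ f x := fun x => by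
    by_cases hx : x ∈ D
    · simpa [f, hx] using hPhi x hx
    · simp [f, hx]
  obtain ⟨b, hbA, hbD⟩ := hne
  refine ⟨f, (lscW_PhiF br A).ite_mem_top hDclosed,
    (convexE_PhiF br A).ite_mem_top hDconv hPhi_ne_bot, ⟨b, ?_⟩, hq_le, ?_⟩
  · simpa [f, hbD] using
      ne_top_of_le_ne_top (EReal.coe_ne_top _) ((PhiF_le_qQ_iff_mem_qPi br A hsym b).2 hbA)
  · ext x
    by_cases hx : x ∈ D
    · simp [PqSet, f, hx, le_antisymm_iff, hPhi x hx, PhiF_le_qQ_iff_mem_qPi br A hsym]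
    · simp [PqSet, f, hx]

/-- If D is w(B,B)-closed convex with Φ_A ≥ q on D and
A^π ∩ D ≠ ∅, then A^π ∩ D is q-representable. -/
theorem stmt9 [Nontrivial B] (br : B →ₗ[ℝ] B →ₗ[ℝ] ℝ)
    (hsym : ∀ x y : B, br x y = br y x)
    (A D : Set B) (hA : A.Nonempty)
    (hDclosed : @IsClosed B (weakTop br) D) (hDconv : Convex ℝ D)
    (hPhi : ∀ b ∈ D, ((qQ br b : ℝ) : EReal) ≤ PhiF br A b)
    (hne : (qPi br A ∩ D).Nonempty) :
    IsQRepresentable br (qPi br A ∩ D) :=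
  stmt9_general br hsym A D hDclosed hDconv hPhi hne
end
end

section
/- Let A be a q-positive subset of an SSD space B such that Φ_A(b) ≥ q(b) for every b in the w(B,B)-closure of the convex hull of A. Then G_{Φ_A} = P_q(Φ_A^@). -/
/-! On `A` itself `Φ_A ≤ q`, which gives `Φ_A ≤ Φ_A^@`; together with the Fenchel–Young
inequality `⌊b,b⌋ ≤ Φ_A(b) + Φ_A^@(b)` this squeezes both conditions to
`Φ_A(b) = q(b) = Φ_A^@(b)` once `q(b) ≤ Φ_A(b)` is known. That bound is the hypothesis on
`cl_w(conv A)`, and off this set `Φ_A^@ = +∞`: the topology `w(B,B)` is `σ(B,B)`, so Hahn–Banach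
gives `d` with `⌊b,d⌋ < u < ⌊a,d⌋` for all `a ∈ A`, and along the ray `a₀ - t d` the conjugate
grows linearly. -/

noncomputable section

variable {B : Type*} [AddCommGroup B] [Module ℝ B]

theorem weakTop_eq_weakBilin (br : B →ₗ[ℝ] B →ₗ[ℝ] ℝ) :
    weakTop br = WeakBilin.instTopologicalSpace br := by
  rw [weakTop, WeakBilin.instTopologicalSpace, induced_to_pi]
  rfl

theorem exists_lt_lt_of_notMem_weakTop_closure (br : B →ₗ[ℝ] B →ₗ[ℝ] ℝ) {S : Set B}
    (hS : Convex ℝ S) {b : B} (hb : b ∉ @closure B (weakTop br) S) :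
    ∃ d : B, ∃ u : ℝ, br b d < u ∧ ∀ s ∈ S, u < br s d := by
  rw [weakTop_eq_weakBilin] at hb
  have hconv : Convex ℝ (@closure (WeakBilin br) _ S) := Convex.closure hS
  obtain ⟨f, u, hfb, hfS⟩ := geometric_hahn_banach_point_closed hconv isClosed_closure hb
  obtain ⟨d, rfl⟩ := LinearMap.dualEmbedding_surjective br f
  exact ⟨d, u, hfb, fun s hs => hfS s (subset_closure hs)⟩

section Conjugate

variable (br : B →ₗ[ℝ] B →ₗ[ℝ] ℝ)

theorem coe_sub_le_intrinsicConj (f : B → EReal) (c b : B) :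
    ((br c b : ℝ) : EReal) - f c ≤ intrinsicConj br f b :=
  le_iSup (fun c => ((br c b : ℝ) : EReal) - f c) c

theorem coe_sub_le_intrinsicConj_of_le {f : B → EReal} {c : B} {r : ℝ} (h : f c ≤ r) (b : B) :
    ((br c b - r : ℝ) : EReal) ≤ intrinsicConj br f b := by
  rw [EReal.coe_sub]
  exact (EReal.sub_le_sub le_rfl h).trans (coe_sub_le_intrinsicConj br f c b)

theorem coe_le_PhiF {A : Set B} {a : B} (ha : a ∈ A) (x : B) :
    ((br x a - qQ br a : ℝ) : EReal) ≤ PhiF br A x :=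
  le_iSup₂ (f := fun a (_ : a ∈ A) => ((br x a - qQ br a : ℝ) : EReal)) a ha

theorem PhiF_le_coe {A : Set B} {x : B} {r : ℝ} (h : ∀ a ∈ A, br x a - qQ br a ≤ r) :
    PhiF br A x ≤ r :=
  iSup₂_le fun a ha => EReal.coe_le_coe_iff.2 (h a ha)

theorem PhiF_ne_bot {A : Set B} (hA : A.Nonempty) (x : B) : PhiF br A x ≠ ⊥ :=
  have ⟨_, ha⟩ := hA
  ne_bot_of_le_ne_bot (EReal.coe_ne_bot _) (coe_le_PhiF br ha x)

end Conjugate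

section Symmetric

variable {br : B →ₗ[ℝ] B →ₗ[ℝ] ℝ} {A : Set B}

theorem apply_sub_qQ_le_qQ (hsym : ∀ x y : B, br x y = br y x) (hA : IsQPositive br A)
    {a c : B} (ha : a ∈ A) (hc : c ∈ A) : br a c - qQ br c ≤ qQ br a := by
  have h := hA.2 a ha c hc
  simp only [qQ, map_sub, LinearMap.sub_apply] at h ⊢
  linarith [hsym a c]

theorem PhiF_le_intrinsicConj (hsym : ∀ x y : B, br x y = br y x) (hA : IsQPositive br A)
    (b : B) : PhiF br A b ≤ intrinsicConj br (PhiF br A) b := by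
  refine iSup₂_le fun a ha => ?_
  rw [hsym]
  exact coe_sub_le_intrinsicConj_of_le br
    (PhiF_le_coe br fun c hc => apply_sub_qQ_le_qQ hsym hA ha hc) b

theorem intrinsicConj_PhiF_eq_top_of_notMem_closure (hsym : ∀ x y : B, br x y = br y x)
    (hA : IsQPositive br A) {b : B} (hb : b ∉ @closure B (weakTop br) (convexHull ℝ A)) :
    intrinsicConj br (PhiF br A) b = ⊤ := by
  obtain ⟨a₀, ha₀⟩ := hA.1
  obtain ⟨d, u, hbd, hAd⟩ :=
    exists_lt_lt_of_notMem_weakTop_closure br (convex_convexHull ℝ A) hb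
  set C := br a₀ b - qQ br a₀
  set δ := u - br b d
  have hδ : 0 < δ := sub_pos.2 hbd
  have hray : ∀ t : ℝ, 0 ≤ t → ((C + t * δ : ℝ) : EReal) ≤ intrinsicConj br (PhiF br A) b := by
    intro t ht
    have hΦ : PhiF br A (a₀ - t • d) ≤ ((qQ br a₀ - t * u : ℝ) : EReal) := by
      refine PhiF_le_coe br fun a ha => ?_
      have h₁ := apply_sub_qQ_le_qQ hsym hA ha₀ ha
      have h₂ := mul_le_mul_of_nonneg_left (hAd a (subset_convexHull ℝ A ha)).le ht
      simp only [map_sub, map_smul, LinearMap.sub_apply, LinearMap.smul_apply, smul_eq_mul,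
        hsym d a]
      linarith
    convert coe_sub_le_intrinsicConj_of_le br hΦ b using 2
    simp only [C, δ, map_sub, map_smul, LinearMap.sub_apply, LinearMap.smul_apply, smul_eq_mul,
      hsym d b]
    ring
  refine (EReal.eq_top_iff_forall_lt _).2 fun M => ?_
  refine lt_of_lt_of_le (EReal.coe_lt_coe_iff.2 ?_) (hray (|M - C| / δ + 1) (by positivity))
  rw [add_mul, div_mul_cancel₀ _ hδ.ne', one_mul]
  linarith [le_abs_self (M - C)]

end Symmetric

theorem stmt10_general (br : B →ₗ[ℝ] B →ₗ[ℝ] ℝ)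
    (hsym : ∀ x y : B, br x y = br y x)
    (A : Set B) (hA : IsQPositive br A)
    (hPhi : ∀ b ∈ @closure B (weakTop br) (convexHull ℝ A),
      ((qQ br b : ℝ) : EReal) ≤ PhiF br A b) :
    GSet br (PhiF br A) = PqSet br (intrinsicConj br (PhiF br A)) := by
  ext b
  have hbot := PhiF_ne_bot br hA.1 b
  have hle := PhiF_le_intrinsicConj hsym hA b
  have hyoung := coe_sub_le_intrinsicConj br (PhiF br A) b b
  have hq : intrinsicConj br (PhiF br A) b ≠ ⊤ → ((qQ br b : ℝ) : EReal) ≤ PhiF br A b :=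
    fun h => hPhi b <| by_contra fun hb =>
      h (intrinsicConj_PhiF_eq_top_of_notMem_closure hsym hA hb)
  have hbb : br b b = 2 * qQ br b := by simp only [qQ]; ring
  simp only [GSet, PqSet, Set.mem_ofPred_eq]
  rw [hbb] at hyoung ⊢
  generalize PhiF br A b = φ at *
  generalize intrinsicConj br (PhiF br A) b = ψ at *
  -- `φ ≠ ⊥` and `φ ≤ ψ` leave only finite values: an infinite one makes both sides false.
  induction φ using EReal.rec <;> induction ψ using EReal.rec <;> simp_all [-EReal.coe_mul]
  norm_cast at hyoung ⊢
  constructor <;> intro <;> linarith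

/-- If Φ_A ≥ q on cl_w(conv A), then G_{Φ_A} = P_q(Φ_A^@). -/
theorem stmt10 [Nontrivial B] (br : B →ₗ[ℝ] B →ₗ[ℝ] ℝ)
    (hsym : ∀ x y : B, br x y = br y x)
    (A : Set B) (hA : IsQPositive br A)
    (hPhi : ∀ b ∈ @closure B (weakTop br) (convexHull ℝ A),
      ((qQ br b : ℝ) : EReal) ≤ PhiF br A b) :
    GSet br (PhiF br A) = PqSet br (intrinsicConj br (PhiF br A)) :=
  stmt10_general br hsym A hA hPhi
end
end
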